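/- arXiv:1806.06141 — 2 statements merged into one kernel-verified Lean document; each statement's English description precedes it below -/
import Mathlib

section
/- Let T be a bounded operator on a complex Hilbert space H with Moore–Penrose inverse T† and polar decomposition T = U|T|. Then T† = U^*|T†| is the polar decomposition of T†; that is, U^* is a partial isometry and (U^*)^*U^* = UU^* equals the orthogonal projection onto the closure of the range of (T†)^*. -/
open ContinuousLinearMap

variable {H : Type*} [NormedAddCommGroup H] [InnerProductSpace ℂ H] [CompleteSpace H]

/-- The absolute value `|T| = (T^*T)^(1/2)` of a bounded operator on a complex
Hilbert space, defined via the continuous functional calculus. -/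
noncomputable def absOp (T : H →L[ℂ] H) : H →L[ℂ] H :=
  cfc Real.sqrt (adjoint T * T)

/-- The orthogonal projection of `H` onto the closure of the range of `T`,
regarded as an operator on `H`. -/
noncomputable def rangeProjOp (T : H →L[ℂ] H) : H →L[ℂ] H :=
  (LinearMap.range (T : H →ₗ[ℂ] H)).topologicalClosure.subtypeL ∘L
    Submodule.orthogonalProjectionOnto (LinearMap.range (T : H →ₗ[ℂ] H)).topologicalClosure

/-- `U` is a partial isometry: `U^*U` is an orthogonal projection
(a self-adjoint idempotent). -/
def IsPartialIsometryOp (U : H →L[ℂ] H) : Prop :=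
  IsSelfAdjoint (adjoint U * U) ∧ (adjoint U * U) * (adjoint U * U) = adjoint U * U

/-- `T = U|T|` is the polar decomposition of `T`: `U` is a partial isometry and
`U^*U` is the orthogonal projection onto the closure of the range of `T^*`. -/
def IsPolarDecompositionOp (T U : H →L[ℂ] H) : Prop :=
  T = U * absOp T ∧ IsPartialIsometryOp U ∧ adjoint U * U = rangeProjOp (adjoint T)

/-- `X` is the Moore--Penrose inverse of `T`: the four Penrose equations hold. -/
def IsMoorePenroseInv (T X : H →L[ℂ] H) : Prop :=
  T * X * T = T ∧ X * T * X = X ∧ IsSelfAdjoint (T * X) ∧ IsSelfAdjoint (X * T)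

/-!
Both `U^*U` and `T†T` are the projection `P` onto the closure of the range of `T^*`. Since `|T|`
and `T` have the same kernel (by the C*-identity, as `|T|^2 = T^*T`), `|T| P = |T|`, hence
`U^*T = |T|`. It follows that `G = T†U` is the Moore–Penrose inverse of `|T|`, so `G` is positive,
and that `T† = G U^*`. Then `U G U^*` is a positive square root of `(T†)^*T†`, i.e. `|T†| = U G U^*`,
which gives `T† = U^*|T†|`; and `UU^* = (T†)^* |T| U^*` is a projection fixing `(T†)^*`, so it
is the projection onto the closure of the range of `(T†)^*`.
-/

section CStarRing

variable {R : Type*} [NormedRing R] [StarRing R] [CStarRing R]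

theorem CStarRing.mul_eq_self_of_star_mul_self_eq {a b c : R} (h : star a * a = star b * b)
    (hbc : b * c = b) : a * c = a := by
  have hb : b * (c - 1) = 0 := by rw [mul_sub_one, hbc, sub_self]
  have key : star (a * (c - 1)) * (a * (c - 1)) = star (b * (c - 1)) * (b * (c - 1)) := by
    simp only [star_mul, mul_assoc]
    rw [← mul_assoc (star a), h, mul_assoc]
  rwa [hb, mul_zero, CStarRing.star_mul_self_eq_zero_iff, mul_sub_one, sub_eq_zero] at key

theorem CStarRing.mul_star_mul_self_of_isIdempotentElem {u : R}
    (h : IsIdempotentElem (star u * u)) : u * (star u * u) = u :=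
  CStarRing.mul_eq_self_of_star_mul_self_eq (by rw [star_mul, star_star, h.eq]) h.eq

end CStarRing

theorem absOp_eq_abs (T : H →L[ℂ] H) : absOp T = CFC.abs T := by
  rw [absOp, CFC.abs, CFC.sqrt_eq_real_sqrt _ (star_mul_self_nonneg T), cfcₙ_eq_cfc,
    star_eq_adjoint]

theorem absOp_nonneg (T : H →L[ℂ] H) : 0 ≤ absOp T :=
  absOp_eq_abs T ▸ CFC.abs_nonneg T

theorem absOp_mul_self (T : H →L[ℂ] H) : absOp T * absOp T = star T * T :=
  absOp_eq_abs T ▸ CFC.abs_mul_abs T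

theorem rangeProjOp_eq_of_isStarProjection {S Q Y : H →L[ℂ] H} (hQ : IsStarProjection Q)
    (hQS : Q * S = S) (hSY : S * Y = Q) : rangeProjOp S = Q := by
  have hrange : LinearMap.range (S : H →ₗ[ℂ] H) = LinearMap.range (Q : H →ₗ[ℂ] H) := by
    apply le_antisymm
    · rintro _ ⟨x, rfl⟩
      exact ⟨S x, DFunLike.congr_fun hQS x⟩
    · rintro _ ⟨x, rfl⟩
      exact ⟨Y x, DFunLike.congr_fun hSY x⟩
  refine isStarProjection_starProjection.ext hQ ?_
  rw [Submodule.range_starProjection, hrange]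
  exact hQ.isIdempotentElem.isClosed_range.submodule_topologicalClosure_eq

section MoorePenrose

variable {T X Y : H →L[ℂ] H}

protected theorem IsMoorePenroseInv.star (h : IsMoorePenroseInv T X) :
    IsMoorePenroseInv (star T) (star X) := by
  obtain ⟨h₁, h₂, h₃, h₄⟩ := h
  refine ⟨?_, ?_, ?_, ?_⟩
  · simpa only [star_mul, mul_assoc] using congrArg star h₁
  · simpa only [star_mul, mul_assoc] using congrArg star h₂
  · simpa only [star_mul] using IsSelfAdjoint.star_iff.mpr h₄
  · simpa only [star_mul] using IsSelfAdjoint.star_iff.mpr h₃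

theorem IsMoorePenroseInv.self_mul_eq_self_mul (hX : IsMoorePenroseInv T X)
    (hY : IsMoorePenroseInv T Y) : T * X = T * Y :=
  calc T * X = T * Y * T * X := by rw [hY.1]
    _ = star (T * Y) * star (T * X) := by rw [hY.2.2.1.star_eq, hX.2.2.1.star_eq]; noncomm_ring
    _ = star (T * X * T * Y) := by rw [← star_mul]; simp only [mul_assoc]
    _ = T * Y := by rw [hX.1, hY.2.2.1.star_eq]

theorem IsMoorePenroseInv.unique (hX : IsMoorePenroseInv T X) (hY : IsMoorePenroseInv T Y) :
    X = Y := by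
  have hTX : T * X = T * Y := hX.self_mul_eq_self_mul hY
  have hXT : X * T = Y * T := by
    simpa only [star_mul, star_star] using congrArg star (hX.star.self_mul_eq_self_mul hY.star)
  calc X = X * T * X := hX.2.1.symm
    _ = Y * T * Y := by rw [hXT, mul_assoc, hTX, ← mul_assoc]
    _ = Y := hY.2.1

theorem IsMoorePenroseInv.isSelfAdjoint (hT : IsSelfAdjoint T) (h : IsMoorePenroseInv T X) :
    IsSelfAdjoint X := by
  have h' := h.star
  rw [hT.star_eq] at h'
  exact h'.unique h

theorem IsMoorePenroseInv.nonneg (hT : 0 ≤ T) (h : IsMoorePenroseInv T X) : 0 ≤ X := by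
  have hconj := star_left_conjugate_nonneg hT X
  rwa [(h.isSelfAdjoint hT.isSelfAdjoint).star_eq, h.2.1] at hconj

theorem IsMoorePenroseInv.rangeProjOp_eq (h : IsMoorePenroseInv T X) :
    rangeProjOp T = T * X := by
  refine rangeProjOp_eq_of_isStarProjection ⟨?_, h.2.2.1⟩ h.1 rfl
  change T * X * (T * X) = T * X
  rw [← mul_assoc, h.1]

theorem IsMoorePenroseInv.mul_eq_self_of_mul_eq_self {Q : H →L[ℂ] H}
    (h : IsMoorePenroseInv T X) (hQ : IsSelfAdjoint Q) (hQT : Q * T = T) : X * Q = X :=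
  calc X * Q = X * star (T * X) * Q := by rw [h.2.2.1.star_eq, ← mul_assoc, h.2.1]
    _ = X * star X * star (Q * T) := by rw [star_mul, star_mul, hQ.star_eq]; noncomm_ring
    _ = X := by rw [hQT, mul_assoc, ← star_mul, h.2.2.1.star_eq, ← mul_assoc, h.2.1]

end MoorePenrose

section PolarDecomposition

variable {T U X : H →L[ℂ] H}

theorem IsPartialIsometryOp.mul_star_mul_self (hU : IsPartialIsometryOp U) :
    U * (star U * U) = U :=
  CStarRing.mul_star_mul_self_of_isIdempotentElem hU.2

theorem IsPartialIsometryOp.isStarProjection_mul_star (hU : IsPartialIsometryOp U) :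
    IsStarProjection (U * star U) :=
  ⟨by rw [IsIdempotentElem, ← mul_assoc, mul_assoc U (star U) U, hU.mul_star_mul_self],
    .mul_star_self U⟩

theorem IsPartialIsometryOp.adjoint (hU : IsPartialIsometryOp U) :
    IsPartialIsometryOp (adjoint U) := by
  obtain ⟨hidem, hsa⟩ := hU.isStarProjection_mul_star
  simp only [IsPartialIsometryOp, ← star_eq_adjoint, star_star]
  exact ⟨hsa, hidem⟩

namespace IsPolarDecompositionOp

theorem star_mul_self_eq (hT : IsPolarDecompositionOp T U) (hX : IsMoorePenroseInv T X) :
    star U * U = X * T := by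
  rw [star_eq_adjoint, hT.2.2, ← star_eq_adjoint, hX.star.rangeProjOp_eq, ← star_mul,
    hX.2.2.2.star_eq]

theorem star_mul_eq_absOp (hT : IsPolarDecompositionOp T U) (hX : IsMoorePenroseInv T X) :
    star U * T = absOp T := by
  have hA := (absOp_nonneg T).isSelfAdjoint
  have hAP : absOp T * (X * T) = absOp T :=
    CStarRing.mul_eq_self_of_star_mul_self_eq (by rw [hA.star_eq, absOp_mul_self]) hX.1
  have hPA := congrArg star hAP
  rw [star_mul, hX.2.2.2.star_eq, hA.star_eq] at hPA
  conv_lhs => rw [hT.1]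
  rw [← mul_assoc, hT.star_mul_self_eq hX, hPA]

theorem isMoorePenroseInv_absOp (hT : IsPolarDecompositionOp T U)
    (hX : IsMoorePenroseInv T X) : IsMoorePenroseInv (absOp T) (X * U) := by
  have hUA : U * absOp T = T := hT.1.symm
  have hUT := hT.star_mul_eq_absOp hX
  refine ⟨?_, ?_, ?_, ?_⟩
  · calc absOp T * (X * U) * absOp T = star U * T * X * (U * absOp T) := by
          rw [hUT]; noncomm_ring
      _ = star U * (T * X * T) := by rw [hUA]; noncomm_ring
      _ = absOp T := by rw [hX.1, hUT]
  · calc X * U * absOp T * (X * U) = X * (U * absOp T) * X * U := by noncomm_ring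
      _ = X * U := by rw [hUA, hX.2.1]
  · have hAXU : absOp T * (X * U) = star U * (T * X) * U := by rw [← hUT]; noncomm_ring
    rw [hAXU]
    exact hX.2.2.1.conjugate' U
  · rw [mul_assoc, hUA]
    exact hX.2.2.2

theorem mul_mul_star_eq (hT : IsPolarDecompositionOp T U) (hX : IsMoorePenroseInv T X) :
    X * U * star U = X := by
  rw [mul_assoc]
  exact hX.mul_eq_self_of_mul_eq_self (.mul_star_self U)
    (by rw [mul_assoc, hT.star_mul_eq_absOp hX, ← hT.1])

theorem star_eq_mul_mul (hT : IsPolarDecompositionOp T U) (hX : IsMoorePenroseInv T X) :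
    star X = U * (X * U) := by
  have hG := (hT.isMoorePenroseInv_absOp hX).isSelfAdjoint (absOp_nonneg T).isSelfAdjoint
  conv_lhs => rw [← hT.mul_mul_star_eq hX]
  rw [star_mul, star_star, hG.star_eq]

theorem absOp_eq (hT : IsPolarDecompositionOp T U) (hX : IsMoorePenroseInv T X) :
    absOp X = U * (X * U) * star U := by
  have hG := (hT.isMoorePenroseInv_absOp hX).nonneg (absOp_nonneg T)
  rw [absOp_eq_abs, CFC.abs]
  refine CFC.sqrt_unique ?_ (star_right_conjugate_nonneg hG U)
  calc U * (X * U) * star U * (U * (X * U) * star U)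
      = U * (X * U) * (X * T * X * U * star U) := by rw [← hT.star_mul_self_eq hX]; noncomm_ring
    _ = star X * X := by rw [hX.2.1, hT.mul_mul_star_eq hX, hT.star_eq_mul_mul hX]

end IsPolarDecompositionOp

end PolarDecomposition

/-- If `T = U|T|` is the polar decomposition and `X = T†`, then
`T† = U^*|T†|` is the polar decomposition of `T†`. -/
theorem polarDecomposition_moorePenrose (T X U : H →L[ℂ] H)
    (hX : IsMoorePenroseInv T X) (hT : IsPolarDecompositionOp T U) :
    X = adjoint U * absOp X ∧ IsPartialIsometryOp (adjoint U) ∧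
      U * adjoint U = rangeProjOp (adjoint X) := by
  have hP := hT.star_mul_self_eq hX
  have hXstar := hT.star_eq_mul_mul hX
  refine ⟨?_, hT.2.1.adjoint, ?_⟩
  · rw [← star_eq_adjoint, hT.absOp_eq hX, ← mul_assoc, ← mul_assoc, hP, ← mul_assoc, hX.2.1,
      hT.mul_mul_star_eq hX]
  · simp only [← star_eq_adjoint]
    refine (rangeProjOp_eq_of_isStarProjection hT.2.1.isStarProjection_mul_star
      (Y := absOp T * star U) ?_ ?_).symm
    · calc U * star U * star X = U * (star U * U * X) * U := by rw [hXstar]; noncomm_ring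
        _ = star X := by rw [hP, hX.2.1, hXstar, mul_assoc]
    · calc star X * (absOp T * star U) = U * (X * (U * absOp T)) * star U := by
            rw [hXstar]; noncomm_ring
        _ = U * star U := by rw [← hT.1, ← hP, hT.2.1.mul_star_mul_self]
end

section
/- Let T be a bounded operator on a complex Hilbert space H with Moore–Penrose inverse T† and polar decomposition T = U|T|, and let n ∈ ℕ be such that T is n-centered. Then for every k with 1 ≤ k ≤ n, T^k has a Moore–Penrose inverse and (T^k)† = (T†)^k (i.e. (T†)^k satisfies the four Penrose equations for T^k). -/
open ContinuousLinearMap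

variable {H : Type*} [NormedAddCommGroup H] [InnerProductSpace ℂ H] [CompleteSpace H]

/-- `T` (with polar decomposition `T = U|T|`) is `n`-centered: for every
`1 ≤ k ≤ n`, `T^k = U^k |T^k|` is the polar decomposition of `T^k`. -/
def IsNCentered (n : ℕ) (T U : H →L[ℂ] H) : Prop :=
  ∀ k : ℕ, 1 ≤ k → k ≤ n → IsPolarDecompositionOp (T ^ k) (U ^ k)

/-!
Write `Pₖ = Uᵏ(Uᵏ)*` and `Qₖ = (Uᵏ)*Uᵏ`. Centredness makes every `Uᵏ` a partial isometry with
`PₖTᵏ = Tᵏ = TᵏQₖ`, and a product `AB` of partial isometries is again one only if `A*A` commutes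
with `BB*`; applied to `U·Uᵏ` and `Uᵏ·U` this makes `Q₁` commute with `Pₖ` and `Qₖ` with `P₁`.
Starting from `TX = P₁` and `XT = Q₁`, induction on `k` gives `TᵏXᵏ = Pₖ`: since `|T|Tᵏ = U*Tᵏ⁺¹`
lies in `Q₁Uᵏ(H)`, which `Pₖ` fixes, `Pₖ` reduces `|T| = U*T`, and
`Tᵏ⁺¹Xᵏ⁺¹ = U|T|PₖX = UPₖ|T|X = UPₖU* = Pₖ₊₁`. All hypotheses are invariant under passing to
adjoints, which turns this into `XᵏTᵏ = Qₖ`; then `XᵏTᵏXᵏ = Xᵏ` follows by induction from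
`QₖP₁ = P₁Qₖ`.
-/

section StarSemigroup

variable {R : Type*} [Semigroup R] [StarMul R]

theorem commute_of_mul_mul_eq_mul {b p : R} (hb : IsSelfAdjoint b) (hp : IsSelfAdjoint p)
    (h : p * b * p = b * p) : Commute b p :=
  calc b * p = p * b * p := h.symm
    _ = star (p * b * p) := (hb.conjugate_self hp).star_eq.symm
    _ = p * b := by rw [h, star_mul, hb.star_eq, hp.star_eq]

theorem IsSelfAdjoint.eq_of_mul_eq_of_mul_eq {e p : R} (he : IsSelfAdjoint e)
    (hp : IsSelfAdjoint p) (hpe : p * e = e) (hep : e * p = p) : e = p :=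
  calc e = star (p * e) := by rw [hpe, he.star_eq]
    _ = e * p := by rw [star_mul, he.star_eq, hp.star_eq]
    _ = p := hep

end StarSemigroup

def IsPartialIsometry {R : Type*} [Mul R] [Star R] (u : R) : Prop :=
  IsStarProjection (star u * u)

/-- The algebraic content of a polar decomposition `t = u |t|`, where `|t| = u* t`. -/
structure IsPolarPair {R : Type*} [Mul R] [Star R] (t u : R) : Prop where
  isPartialIsometry : IsPartialIsometry u
  mul_star_mul : u * star u * t = t
  isSelfAdjoint_star_mul : IsSelfAdjoint (star u * t)

theorem IsPolarPair.isSelfAdjoint_mul_star {R : Type*} [Semigroup R] [StarMul R] {t u : R}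
    (h : IsPolarPair t u) : IsSelfAdjoint (t * star u) := by
  rw [← h.mul_star_mul, mul_assoc u]
  exact h.isSelfAdjoint_star_mul.conjugate u

section CStarRing

variable {A : Type*} [NonUnitalNormedRing A] [StarRing A] [CStarRing A]

theorem IsStarProjection.commute_of_mul_mul_mul_mul_eq {e f : A} (he : IsStarProjection e)
    (hf : IsStarProjection f) (h : f * e * f * e * f = f * e * f) : Commute e f := by
  have hef : e * f = f * e * f := by
    rw [← sub_eq_zero, ← CStarRing.star_mul_self_eq_zero_iff]
    calc star (e * f - f * e * f) * (e * f - f * e * f)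
        = f * (e * e) * f - f * e * f * e * f - f * e * f * e * f + f * e * (f * f) * e * f := by
          simp only [star_sub, star_mul, he.isSelfAdjoint.star_eq, hf.isSelfAdjoint.star_eq]
          noncomm_ring
      _ = 0 := by
          simp only [he.isIdempotentElem.eq, hf.isIdempotentElem.eq, h]
          abel
  exact commute_of_mul_mul_eq_mul he.isSelfAdjoint hf.isSelfAdjoint hef.symm

namespace IsPartialIsometry

variable {u : A}

theorem mul_star_mul_self (hu : IsPartialIsometry u) : u * star u * u = u := by
  have hq : IsIdempotentElem (star u * u) := hu.isIdempotentElem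
  rw [← sub_eq_zero, ← CStarRing.star_mul_self_eq_zero_iff]
  calc star (u * star u * u - u) * (u * star u * u - u)
      = star u * u * (star u * u) * (star u * u) - star u * u * (star u * u)
        - (star u * u * (star u * u) - star u * u) := by
        simp only [star_sub, star_mul, star_star]
        noncomm_ring
    _ = 0 := by simp only [hq.eq, sub_self]

theorem isStarProjection_mul_star (hu : IsPartialIsometry u) : IsStarProjection (u * star u) where
  isIdempotentElem := by
    rw [IsIdempotentElem, ← mul_assoc, hu.mul_star_mul_self]
  isSelfAdjoint := .mul_star_self u

protected theorem star (hu : IsPartialIsometry u) : IsPartialIsometry (star u) := by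
  rw [IsPartialIsometry, star_star]
  exact hu.isStarProjection_mul_star

theorem star_mul_mul_star (hu : IsPartialIsometry u) : star u * u * star u = star u := by
  simpa only [star_star] using hu.star.mul_star_mul_self

theorem commute_of_mul {a b : A} (ha : IsPartialIsometry a) (hb : IsPartialIsometry b)
    (hab : IsPartialIsometry (a * b)) : Commute (star a * a) (b * star b) := by
  refine ha.commute_of_mul_mul_mul_mul_eq hb.isStarProjection_mul_star ?_
  have h := congrArg (fun z => b * z * star b) hab.isIdempotentElem.eq
  simp only [star_mul] at h
  calc b * star b * (star a * a) * (b * star b) * (star a * a) * (b * star b)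
      = b * (star b * star a * (a * b) * (star b * star a * (a * b))) * star b := by
        noncomm_ring
    _ = b * star b * (star a * a) * (b * star b) := by rw [h]; noncomm_ring

end IsPartialIsometry

end CStarRing

namespace IsPolarPair

variable {A : Type*} [NonUnitalNormedRing A] [StarRing A] [CStarRing A] {t u : A}

theorem mul_star_mul_self (h : IsPolarPair t u) : t * (star u * u) = t := by
  have hleft : star u * u * (star u * t) = star u * t := by
    rw [← mul_assoc, h.isPartialIsometry.star_mul_mul_star]
  have hright : star u * t * (star u * u) = star u * t := by
    simpa only [star_mul, star_star, h.isSelfAdjoint_star_mul.star_eq, mul_assoc]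
      using congrArg star hleft
  calc t * (star u * u) = u * (star u * t * (star u * u)) := by
        conv_lhs => rw [← h.mul_star_mul]
        noncomm_ring
    _ = t := by rw [hright, ← mul_assoc, h.mul_star_mul]

protected theorem star (h : IsPolarPair t u) : IsPolarPair (star t) (star u) where
  isPartialIsometry := h.isPartialIsometry.star
  mul_star_mul := by
    simpa only [star_mul, star_star, mul_assoc] using congrArg star h.mul_star_mul_self
  isSelfAdjoint_star_mul := by
    rw [← star_mul]
    exact IsSelfAdjoint.star_iff.mpr h.isSelfAdjoint_mul_star

theorem mul_eq_mul_star {x : A} (h : IsPolarPair t u) (htxt : t * x * t = t)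
    (htx : IsSelfAdjoint (t * x)) (hxt : x * t = star u * u) : t * x = u * star u := by
  have hu : u = t * star u * star x :=
    calc u = u * star (x * t) := by
          rw [hxt, star_mul, star_star, ← mul_assoc, h.isPartialIsometry.mul_star_mul_self]
      _ = star (t * star u) * star x := by rw [star_mul, star_mul, star_star, mul_assoc]
      _ = t * star u * star x := by rw [h.isSelfAdjoint_mul_star.star_eq]
  have htxu : t * x * u = u := by
    conv_lhs => rw [hu]
    rw [← mul_assoc, ← mul_assoc, htxt, ← hu]
  refine htx.eq_of_mul_eq_of_mul_eq (.mul_star_self u) ?_ ?_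
  · rw [← mul_assoc, h.mul_star_mul]
  · rw [← mul_assoc, htxu]

end IsPolarPair

section Powers

variable {A : Type*} [NormedRing A] [StarRing A] [CStarRing A] {t x u : A} {n : ℕ}

theorem pow_mul_pow_eq_mul_star (hc : ∀ j, 1 ≤ j → j ≤ n → IsPolarPair (t ^ j) (u ^ j))
    (htx : t * x = u * star u) : ∀ k, 1 ≤ k → k ≤ n → t ^ k * x ^ k = u ^ k * star (u ^ k) := by
  intro k hk1
  induction k, hk1 using Nat.le_induction with
  | base => simpa only [pow_one] using fun _ => htx
  | succ k hk ih =>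
    intro hkn
    have h1 : IsPolarPair t u := by simpa only [pow_one] using hc 1 le_rfl (by omega)
    have hck := hc k hk (by omega)
    have hck1 := hc (k + 1) (by omega) hkn
    have hQP : Commute (star u * u) (u ^ k * star (u ^ k)) :=
      h1.isPartialIsometry.commute_of_mul hck.isPartialIsometry
        (by simpa only [pow_succ'] using hck1.isPartialIsometry)
    have hfix : u ^ k * star (u ^ k) * (star u * t * t ^ k) = star u * t * t ^ k := by
      obtain ⟨c, htc⟩ : ∃ c, t ^ (k + 1) = u * u ^ k * c :=
        ⟨star (u ^ (k + 1)) * t ^ (k + 1), by rw [← pow_succ', ← mul_assoc, hck1.mul_star_mul]⟩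
      have hbt : star u * t * t ^ k = star u * u * u ^ k * c := by
        rw [mul_assoc, ← pow_succ', htc]; noncomm_ring
      calc u ^ k * star (u ^ k) * (star u * t * t ^ k)
          = (u ^ k * star (u ^ k)) * (star u * u) * u ^ k * c := by rw [hbt]; noncomm_ring
        _ = star u * u * (u ^ k * star (u ^ k) * u ^ k) * c := by rw [← hQP.eq]; noncomm_ring
        _ = star u * t * t ^ k := by rw [hck.isPartialIsometry.mul_star_mul_self, hbt]
    have hbP : Commute (star u * t) (u ^ k * star (u ^ k)) := by
      refine commute_of_mul_mul_eq_mul h1.isSelfAdjoint_star_mul (.mul_star_self _) ?_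
      calc u ^ k * star (u ^ k) * (star u * t) * (u ^ k * star (u ^ k))
          = u ^ k * star (u ^ k) * (star u * t * t ^ k) * x ^ k := by
            rw [← ih (by omega)]; noncomm_ring
        _ = star u * t * (u ^ k * star (u ^ k)) := by rw [hfix, mul_assoc, ih (by omega)]
    calc t ^ (k + 1) * x ^ (k + 1) = t * (t ^ k * x ^ k) * x := by
          rw [pow_succ' t, pow_succ x]; noncomm_ring
      _ = u * ((star u * t) * (u ^ k * star (u ^ k))) * x := by
          rw [ih (by omega)]; conv_lhs => rw [← h1.mul_star_mul]
          noncomm_ring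
      _ = u * (u ^ k * star (u ^ k)) * (star u * (t * x)) := by rw [hbP.eq]; noncomm_ring
      _ = u ^ (k + 1) * star (u ^ (k + 1)) := by
          rw [htx, ← mul_assoc (star u), h1.isPartialIsometry.star_mul_mul_star, pow_succ',
            star_mul]
          noncomm_ring

theorem pow_mul_pow_eq_star_mul (hc : ∀ j, 1 ≤ j → j ≤ n → IsPolarPair (t ^ j) (u ^ j))
    (hxt : x * t = star u * u) : ∀ k, 1 ≤ k → k ≤ n → x ^ k * t ^ k = star (u ^ k) * u ^ k := by
  intro k hk1 hkn
  have hc' : ∀ j, 1 ≤ j → j ≤ n → IsPolarPair (star t ^ j) (star u ^ j) := fun j hj1 hjn => by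
    simpa only [star_pow] using (hc j hj1 hjn).star
  have htx' : star t * star x = star u * star (star u) := by rw [← star_mul, hxt, star_mul]
  simpa only [star_mul, star_pow, star_star] using
    congrArg star (pow_mul_pow_eq_mul_star hc' htx' k hk1 hkn)

theorem pow_mul_pow_mul_pow_eq_pow (hc : ∀ j, 1 ≤ j → j ≤ n → IsPolarPair (t ^ j) (u ^ j))
    (htx : t * x = u * star u) (hxt : x * t = star u * u) (hxtx : x * t * x = x) :
    ∀ k, 1 ≤ k → k ≤ n → x ^ k * t ^ k * x ^ k = x ^ k := by
  intro k hk1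
  induction k, hk1 using Nat.le_induction with
  | base => simpa only [pow_one] using fun _ => hxtx
  | succ k hk ih =>
    intro hkn
    have h1 : IsPolarPair t u := by simpa only [pow_one] using hc 1 le_rfl (by omega)
    have hQP : Commute (star (u ^ k) * u ^ k) (u * star u) :=
      (hc k hk (by omega)).isPartialIsometry.commute_of_mul h1.isPartialIsometry
        (by simpa only [pow_succ] using (hc (k + 1) (by omega) hkn).isPartialIsometry)
    have hXT := pow_mul_pow_eq_star_mul hc hxt k hk (by omega)
    calc x ^ (k + 1) * t ^ (k + 1) * x ^ (k + 1) = x * (x ^ k * t ^ k) * (t * x) * x ^ k := by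
          rw [pow_succ' x, pow_succ t]; noncomm_ring
      _ = x * (t * x) * (x ^ k * t ^ k) * x ^ k := by
          rw [hXT, htx, mul_assoc x, hQP.eq, ← mul_assoc]
      _ = x * t * x * (x ^ k * t ^ k * x ^ k) := by noncomm_ring
      _ = x ^ (k + 1) := by rw [hxtx, ih (by omega), pow_succ']

end Powers

theorem rangeProjOp_mul_self (S : H →L[ℂ] H) : rangeProjOp S * S = S := by
  ext x
  exact Submodule.starProjection_eq_self_iff.mpr
    (Submodule.le_topologicalClosure _ (LinearMap.mem_range_self _ x))

theorem isSelfAdjoint_rangeProjOp (S : H →L[ℂ] H) : IsSelfAdjoint (rangeProjOp S) :=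
  isSelfAdjoint_starProjection _

theorem mul_rangeProjOp_of_mul_eq {B S : H →L[ℂ] H} (h : B * S = S) :
    B * rangeProjOp S = rangeProjOp S := by
  have hfix : (LinearMap.range (S : H →ₗ[ℂ] H)).topologicalClosure ≤
      LinearMap.ker ((B - 1 : H →L[ℂ] H) : H →ₗ[ℂ] H) := by
    refine Submodule.topologicalClosure_minimal _ ?_ (B - 1).isClosed_ker
    rintro _ ⟨y, rfl⟩
    simpa [sub_eq_zero] using congrArg (· y) h
  ext x
  have hx : rangeProjOp S x ∈ (LinearMap.range (S : H →ₗ[ℂ] H)).topologicalClosure :=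
    Submodule.starProjection_apply_mem _ x
  simpa [sub_eq_zero] using hfix hx

theorem IsMoorePenroseInv.mul_eq_rangeProjOp_adjoint {T X : H →L[ℂ] H}
    (hX : IsMoorePenroseInv T X) : X * T = rangeProjOp (adjoint T) := by
  have hXT : X * T = adjoint T * adjoint X := by
    rw [← hX.2.2.2.star_eq, star_mul, star_eq_adjoint, star_eq_adjoint]
  refine hX.2.2.2.eq_of_mul_eq_of_mul_eq (isSelfAdjoint_rangeProjOp _) ?_ ?_
  · rw [hXT, ← mul_assoc, rangeProjOp_mul_self]
  · refine mul_rangeProjOp_of_mul_eq ?_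
    rw [hXT, ← star_eq_adjoint, ← star_eq_adjoint, ← star_mul, ← star_mul, ← mul_assoc, hX.1]

theorem IsPolarDecompositionOp.isPolarPair {T U : H →L[ℂ] H} (h : IsPolarDecompositionOp T U) :
    IsPolarPair T U := by
  obtain ⟨hT, ⟨hsa, hidem⟩, hQ⟩ := h
  have hU : IsPartialIsometry U := by
    rw [IsPartialIsometry, star_eq_adjoint]
    exact ⟨hidem, hsa⟩
  have hTQ : T * (star U * U) = T := by
    rw [star_eq_adjoint, hQ]
    simpa only [star_mul, star_eq_adjoint, adjoint_adjoint, (isSelfAdjoint_rangeProjOp _).star_eq]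
      using congrArg star (rangeProjOp_mul_self (adjoint T))
  refine ⟨hU, ?_, ?_⟩
  · conv_lhs => rw [hT]
    rw [← mul_assoc, hU.mul_star_mul_self, ← hT]
  · -- for `Q = U*U` and `A = |T|`, `TQ = T` gives `QAQ = QA`, so `U*T = QA` is self-adjoint
    have hUT : star U * T = star U * U * absOp T := by rw [mul_assoc, ← hT]
    have hQAQ : star U * U * absOp T * (star U * U) = star U * U * absOp T := by
      calc star U * U * absOp T * (star U * U) = star U * (U * absOp T * (star U * U)) := by
            noncomm_ring
        _ = star U * U * absOp T := by rw [← hT, hTQ, hUT]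
    have hA : IsSelfAdjoint (absOp T) := IsSelfAdjoint.cfc
    rw [hUT, ← hQAQ]
    exact hA.conjugate_self (.star_mul_self U)

theorem moorePenrose_pow_of_isNCentered_general (T X U : H →L[ℂ] H)
    (hX : IsMoorePenroseInv T X)
    (n : ℕ) (hc : IsNCentered n T U) :
    ∀ k : ℕ, 1 ≤ k → k ≤ n → IsMoorePenroseInv (T ^ k) (X ^ k) := by
  intro k hk1 hkn
  have hpolar : ∀ j, 1 ≤ j → j ≤ n → IsPolarPair (T ^ j) (U ^ j) :=
    fun j hj1 hjn => (hc j hj1 hjn).isPolarPair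
  have hT : IsPolarDecompositionOp T U := by simpa only [pow_one] using hc 1 le_rfl (by omega)
  have hxt : X * T = star U * U := by
    rw [hX.mul_eq_rangeProjOp_adjoint, star_eq_adjoint, hT.2.2]
  have htx : T * X = U * star U := hT.isPolarPair.mul_eq_mul_star hX.1 hX.2.2.1 hxt
  have hTX := pow_mul_pow_eq_mul_star hpolar htx k hk1 hkn
  refine ⟨?_, pow_mul_pow_mul_pow_eq_pow hpolar htx hxt hX.2.1 k hk1 hkn, ?_, ?_⟩
  · rw [hTX]
    exact (hpolar k hk1 hkn).mul_star_mul
  · exact hTX ▸ .mul_star_self _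
  · exact pow_mul_pow_eq_star_mul hpolar hxt k hk1 hkn ▸ .star_mul_self _

/-- If `T` is M-P invertible with `T† = X` and `T` is `n`-centered, then `T^k`
is M-P invertible with `(T^k)† = (T†)^k` for `1 ≤ k ≤ n`. -/
theorem moorePenrose_pow_of_isNCentered (T X U : H →L[ℂ] H)
    (hX : IsMoorePenroseInv T X) (hT : IsPolarDecompositionOp T U)
    (n : ℕ) (hc : IsNCentered n T U) :
    ∀ k : ℕ, 1 ≤ k → k ≤ n → IsMoorePenroseInv (T ^ k) (X ^ k) :=
  moorePenrose_pow_of_isNCentered_general T X U hX n hc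
end
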